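/- Let e ∈ ℤ, a ∈ {1,...,p-1}, and x ∈ pℤ_p. Then f(p^e/(x+a)) = p^e(f(x) + a), where f is the p-adic function defined from Schneider's continued fraction expansion. -/

import Mathlib

open scoped Classical in
noncomputable def eps {p : ℕ} [Fact p.Prime] (x : ℚ_[p]) : ℚ_[p] :=
  if x = 0 then 1 else (p : ℚ_[p]) ^ (-x.valuation) * x

noncomputable def fdigit {p : ℕ} [Fact p.Prime] (x : ℚ_[p]) : ℕ :=
  if h : ‖x‖ ≤ 1 then ((PadicInt.toZMod (⟨x, h⟩ : ℤ_[p])).val) else 0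

noncomputable def tau {p : ℕ} [Fact p.Prime] (x : ℚ_[p]) : ℚ_[p] :=
  1 / eps x - (fdigit (1 / eps x) : ℚ_[p])

noncomputable def sigma {p : ℕ} [Fact p.Prime] (x : ℚ_[p]) : ℚ_[p] :=
  eps x - (fdigit (eps x) : ℚ_[p])

/-- `f(x) = Σ_{n=0}^∞ ⌊1/ε(τⁿ x)⌋_p ∏_{m=0}^n τᵐ x / ε(τᵐ x)` -/
noncomputable def schneiderF {p : ℕ} [Fact p.Prime] (x : ℚ_[p]) : ℚ_[p] :=
  ∑' n : ℕ, (fdigit (1 / eps (tau^[n] x)) : ℚ_[p]) *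
    ∏ m ∈ Finset.range (n + 1), (tau^[m] x) / eps (tau^[m] x)

/-- Finite continued fraction `b 0 / (a 0 + b 1 / (a 1 + ⋯ + b n / (a n + x)))`. -/
noncomputable def cf {p : ℕ} [Fact p.Prime] : (ℕ → ℚ_[p]) → (ℕ → ℚ_[p]) → ℕ → ℚ_[p] → ℚ_[p]
  | a, b, 0, x => b 0 / (a 0 + x)
  | a, b, n + 1, x => b 0 / (a 0 + cf (fun i => a (i + 1)) (fun i => b (i + 1)) n x)

section Aux

variable {p : ℕ} [hp : Fact p.Prime]

lemma norm_eps (x : ℚ_[p]) : ‖eps x‖ = 1 := by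
  unfold eps
  split_ifs with h
  · simp
  · have hpR : (p:ℝ) ≠ 0 := by exact_mod_cast hp.out.ne_zero
    rw [norm_mul, norm_zpow, Padic.norm_eq_zpow_neg_valuation h, Padic.norm_p, inv_zpow,
      ← zpow_neg, neg_neg, ← zpow_add₀ hpR]
    simp

lemma eps_ne_zero (x : ℚ_[p]) : eps x ≠ 0 := by
  intro h; have := norm_eps x; rw [h] at this; simp at this

lemma norm_sub_fdigit_lt {z : ℚ_[p]} (hz : ‖z‖ ≤ 1) : ‖z - (fdigit z : ℚ_[p])‖ < 1 := by
  have : fdigit z = ((PadicInt.toZMod (⟨z, hz⟩ : ℤ_[p])).val) := by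
    unfold fdigit; rw [dif_pos hz]
  rw [this]
  have hmem := PadicInt.toZMod_spec (⟨z, hz⟩ : ℤ_[p])
  rw [PadicInt.maximalIdeal_eq_span_p, Ideal.mem_span_singleton,
    ← PadicInt.norm_lt_one_iff_dvd] at hmem
  have heq : ((⟨z, hz⟩ : ℤ_[p]) - (ZMod.cast (PadicInt.toZMod (⟨z, hz⟩ : ℤ_[p])) : ℤ_[p]) : ℚ_[p])
      = z - ((PadicInt.toZMod (⟨z, hz⟩ : ℤ_[p])).val : ℚ_[p]) := by
    push_cast
    rw [← ZMod.natCast_val]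
    push_cast
    ring
  rw [PadicInt.norm_def] at hmem
  rw [← heq]
  exact hmem

lemma norm_tau_lt (x : ℚ_[p]) : ‖tau x‖ < 1 := by
  unfold tau
  apply norm_sub_fdigit_lt
  rw [one_div, norm_inv, norm_eps]; norm_num

lemma norm_tau_iter_lt {x : ℚ_[p]} (hx : ‖x‖ < 1) (n : ℕ) : ‖tau^[n] x‖ < 1 := by
  induction n with
  | zero => simpa using hx
  | succ n _ => rw [Function.iterate_succ_apply']; exact norm_tau_lt _

lemma norm_div_eps_le {x : ℚ_[p]} (hx : ‖x‖ < 1) : ‖x / eps x‖ ≤ (p:ℝ)⁻¹ := by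
  rw [norm_div, norm_eps, div_one]
  have h := (Padic.norm_lt_pow_iff_norm_le_pow_sub_one x 0).mp (by simpa using hx)
  simpa using h

lemma summable_term {x : ℚ_[p]} (hx : ‖x‖ < 1) :
    Summable (fun n : ℕ => (fdigit (1 / eps (tau^[n] x)) : ℚ_[p]) *
      ∏ m ∈ Finset.range (n + 1), (tau^[m] x) / eps (tau^[m] x)) := by
  have hp1 : (1:ℝ) < p := by exact_mod_cast hp.out.one_lt
  have hinv0 : (0:ℝ) ≤ (p:ℝ)⁻¹ := by positivity
  have hinv1 : (p:ℝ)⁻¹ < 1 := by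
    rw [inv_lt_one_iff₀]; right; exact hp1
  apply Summable.of_norm_bounded (g := fun n => ((p:ℝ)⁻¹) ^ n)
    (summable_geometric_of_lt_one hinv0 hinv1)
  intro n
  rw [norm_mul, norm_prod]
  calc ‖((fdigit (1 / eps (tau^[n] x)) : ℕ) : ℚ_[p])‖ *
        ∏ m ∈ Finset.range (n + 1), ‖tau^[m] x / eps (tau^[m] x)‖
      ≤ 1 * ∏ m ∈ Finset.range (n + 1), ((p:ℝ)⁻¹) := by
        apply mul_le_mul
        · exact_mod_cast Padic.norm_int_le_one ((fdigit (1 / eps (tau^[n] x)) : ℤ))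
        · apply Finset.prod_le_prod
          · intro i _; positivity
          · intro i _; exact norm_div_eps_le (norm_tau_iter_lt hx i)
        · positivity
        · norm_num
    _ = ((p:ℝ)⁻¹) ^ (n + 1) := by rw [one_mul, Finset.prod_const, Finset.card_range]
    _ ≤ ((p:ℝ)⁻¹) ^ n := by
        apply pow_le_pow_of_le_one hinv0 (le_of_lt hinv1)
        omega

end Aux

theorem schneiderF_step (p : ℕ) [Fact p.Prime] (e : ℤ) (a : ℕ)
    (ha : 1 ≤ a ∧ a ≤ p - 1) (x : ℚ_[p]) (hx : ‖x‖ < 1) :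
    schneiderF ((p : ℚ_[p]) ^ e / (x + (a : ℚ_[p]))) = (p : ℚ_[p]) ^ e * (schneiderF x + a) := by
  have hp := (Fact.out : p.Prime)
  have hpQ : (p:ℚ_[p]) ≠ 0 := by exact_mod_cast hp.ne_zero
  have hpR1 : (1:ℝ) < p := by exact_mod_cast hp.one_lt
  have hap : a < p := by omega
  -- norm of a
  have hna : ‖(a:ℚ_[p])‖ = 1 := by
    apply le_antisymm
    · exact_mod_cast Padic.norm_int_le_one (a:ℤ)
    · by_contra h
      push_neg at h
      have := (Padic.norm_intCast_lt_one_iff (k := (a:ℤ))).mp (by exact_mod_cast h)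
      have : p ∣ a := by exact_mod_cast this
      have := Nat.le_of_dvd (by omega) this
      omega
  have hnxa : ‖x + (a:ℚ_[p])‖ = 1 := by
    rw [Padic.add_eq_max_of_ne (by rw [hna]; exact ne_of_lt hx), hna]
    exact max_eq_right (le_of_lt hx)
  have hxa0 : x + (a:ℚ_[p]) ≠ 0 := by
    intro h; rw [h] at hnxa; simp at hnxa
  set y : ℚ_[p] := (p:ℚ_[p]) ^ e / (x + a) with hy
  have hy0 : y ≠ 0 := div_ne_zero (zpow_ne_zero _ hpQ) hxa0
  have hny : ‖y‖ = (p:ℝ) ^ (-e) := by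
    rw [hy, norm_div, hnxa, div_one, Padic.norm_p_zpow]
  have hvy : y.valuation = e := by
    have h1 := Padic.norm_eq_zpow_neg_valuation hy0
    rw [hny] at h1
    have := (zpow_right_strictMono₀ hpR1).injective h1.symm
    omega
  have heps : eps y = 1 / (x + a) := by
    rw [eps, if_neg hy0, hvy, hy, zpow_neg]
    field_simp
  have h1e : 1 / eps y = x + a := by
    rw [heps, one_div_one_div]
  -- fdigit (x + a) = a
  have hnxa1 : ‖x + (a:ℚ_[p])‖ ≤ 1 := le_of_eq hnxa
  have hfd : fdigit (x + (a:ℚ_[p])) = a := by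
    rw [fdigit, dif_pos hnxa1]
    have hsub : @Eq ℤ_[p] ⟨x + a, hnxa1⟩ (@id ℤ_[p] ⟨x, le_of_lt hx⟩ + (a : ℤ_[p])) := by
      apply PadicInt.ext; rfl
    have hX0 : PadicInt.toZMod (@id ℤ_[p] ⟨x, le_of_lt hx⟩) = 0 := by
      refine (RingHom.mem_ker (f := PadicInt.toZMod)).mp ?_
      rw [PadicInt.ker_toZMod, PadicInt.maximalIdeal_eq_span_p,
        Ideal.mem_span_singleton, ← PadicInt.norm_lt_one_iff_dvd, PadicInt.norm_def]
      exact hx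
    rw [hsub, map_add, hX0, zero_add, map_natCast, ZMod.val_natCast_of_lt hap]
  have htauy : tau y = x := by
    rw [tau, h1e, hfd]; ring
  have hyde : y / eps y = (p:ℚ_[p]) ^ e := by
    rw [heps, one_div, div_inv_eq_mul, hy, div_mul_cancel₀ _ hxa0]
  have hiter : ∀ m : ℕ, tau^[m + 1] y = tau^[m] x := by
    intro m; rw [Function.iterate_succ_apply, htauy]
  -- the terms
  set ty : ℕ → ℚ_[p] := fun n => (fdigit (1 / eps (tau^[n] y)) : ℚ_[p]) *
    ∏ m ∈ Finset.range (n + 1), (tau^[m] y) / eps (tau^[m] y) with hty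
  set tx : ℕ → ℚ_[p] := fun n => (fdigit (1 / eps (tau^[n] x)) : ℚ_[p]) *
    ∏ m ∈ Finset.range (n + 1), (tau^[m] x) / eps (tau^[m] x) with htx
  have hshift : ∀ n : ℕ, ty (n + 1) = (p:ℚ_[p]) ^ e * tx n := by
    intro n
    rw [hty, htx]
    simp only
    rw [hiter n, Finset.prod_range_succ']
    simp only [hiter, Function.iterate_zero_apply, hyde]
    ring
  have hsx : Summable tx := summable_term hx
  have hsy : Summable ty := by
    rw [← summable_nat_add_iff 1]
    simp only [hshift]
    exact hsx.mul_left _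
  have hty0 : ty 0 = (p:ℚ_[p]) ^ e * a := by
    rw [hty]
    simp only [zero_add, Function.iterate_zero_apply, Finset.prod_range_one]
    rw [h1e, hfd, hyde]
    ring
  have : schneiderF y = ∑' n, ty n := rfl
  rw [this, Summable.tsum_eq_zero_add hsy, hty0]
  have : ∑' n : ℕ, ty (n + 1) = (p:ℚ_[p]) ^ e * ∑' n, tx n := by
    simp only [hshift]
    exact tsum_mul_left
  rw [this]
  have : schneiderF x = ∑' n, tx n := rfl
  rw [← this]
  ring
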